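/- arXiv:2605.06675 — 4 statements merged into one kernel-verified Lean document; each statement's English description precedes it below -/
import Mathlib

section
/- Let N ≥ 1, w positive, β > 1, and b* the reverse-waterfilling allocation for budget B. Then for all i, the weighted marginal quantity w i · β^{−b* i} is constant in i, equal to β^{−B/N} · (∏ⱼ w j)^{1/N}. -/
open Real

lemma Real.rpow_div_log {β : ℝ} (hβ₀ : 0 < β) (hβ₁ : β ≠ 1) (x : ℝ) :
    β ^ (x / log β) = exp x := by
  rw [rpow_def_of_pos hβ₀, mul_div_cancel₀ _ (log_ne_zero_of_pos_of_ne_one hβ₀ hβ₁)]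

lemma Real.prod_rpow_one_div_card_eq_exp_mean_log {ι : Type*} [Fintype ι] {w : ι → ℝ}
    (hw : ∀ i, 0 < w i) :
    (∏ j, w j) ^ ((1 : ℝ) / Fintype.card ι) =
      exp ((1 / Fintype.card ι) * ∑ j, log (w j)) := by
  rw [rpow_def_of_pos (Finset.prod_pos fun j _ => hw j), log_prod fun j _ => (hw j).ne',
    mul_comm]

theorem stmt_12_general (N : ℕ) (w : Fin N → ℝ) (hw : ∀ i, 0 < w i)
    (β : ℝ) (hβ : 1 < β) (B : ℝ)
    (bstar : Fin N → ℝ)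
    (hb : ∀ i, bstar i = B / N + (Real.log (w i) - (1 / N) * ∑ j, Real.log (w j)) / Real.log β) :
    ∀ i, w i * β ^ (-(bstar i)) = β ^ (-(B / N)) * (∏ j, w j) ^ ((1 : ℝ) / N) := by
  intro i
  have hβ₀ : 0 < β := one_pos.trans hβ
  have hmean := prod_rpow_one_div_card_eq_exp_mean_log hw
  rw [Fintype.card_fin] at hmean
  rw [hb i, neg_add, rpow_add hβ₀, ← neg_div (log β), rpow_div_log hβ₀ hβ.ne', hmean, neg_sub,
    exp_sub, exp_log (hw i)]
  field_simp [(hw i).ne']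

theorem stmt_12 (N : ℕ) (hN : 1 ≤ N) (w : Fin N → ℝ) (hw : ∀ i, 0 < w i)
    (β : ℝ) (hβ : 1 < β) (B : ℝ)
    (bstar : Fin N → ℝ)
    (hb : ∀ i, bstar i = B / N + (Real.log (w i) - (1 / N) * ∑ j, Real.log (w j)) / Real.log β) :
    ∀ i, w i * β ^ (-(bstar i)) = β ^ (-(B / N)) * (∏ j, w j) ^ ((1 : ℝ) / N) :=
  stmt_12_general N w hw β hβ B bstar hb
end

section
/- Let f : Fin N → ℕ → ℝ with each f i strictly decreasing and positive (marginal gains), and suppose we select R items from the multiset {f i k : i ∈ Fin N, k ≥ 1} subject to precedence (item (i,k) may be selected only if (i,1),…,(i,k−1) are selected). Then the greedy algorithm that repeatedly selects the available item of maximum value achieves the maximum total value among all feasible selections of R items. -/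
/-!
A greedy selection admits a threshold `t`: every selected item is worth at least `t` and every
unselected one at most `t` (take `t` to be the best next item). Shifting all values by `-t`
changes any selection of `R` items by the same amount `R t`, and after the shift the greedy
prefix of each chain is exactly its nonnegative part, so it maximizes each chain separately.
-/

open Finset

theorem Finset.sum_Icc_one_le_of_nonneg_of_nonpos {M : Type*} [AddCommMonoid M] [Preorder M]
    [AddLeftMono M] {g : ℕ → M} {a : ℕ} (hsel : ∀ k ∈ Icc 1 a, 0 ≤ g k)
    (hunsel : ∀ k, a < k → g k ≤ 0) (b : ℕ) :
    ∑ k ∈ Icc 1 b, g k ≤ ∑ k ∈ Icc 1 a, g k := by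
  rcases le_total a b with hab | hba
  · exact sum_le_sum_of_subset_of_nonpos' (Icc_subset_Icc_right hab) fun k hk hka ↦
      hunsel k <| by simp_all
  · exact sum_le_sum_of_subset_of_nonneg (Icc_subset_Icc_right hba) fun k hk _ ↦ hsel k hk

theorem Finset.sum_Icc_one_sub_const {R : Type*} [Ring R] (g : ℕ → R) (t : R) (n : ℕ) :
    ∑ k ∈ Icc 1 n, (g k - t) = ∑ k ∈ Icc 1 n, g k - n * t := by
  simp [sum_sub_distrib, nsmul_eq_mul]

theorem sum_sum_Icc_le_of_threshold {ι : Type*} [Fintype ι] (f : ι → ℕ → ℝ) (c c' : ι → ℕ)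
    (t : ℝ) (hsel : ∀ i, ∀ k ∈ Icc 1 (c i), t ≤ f i k) (hunsel : ∀ i k, c i < k → f i k ≤ t)
    (hsum : ∑ i, c' i = ∑ i, c i) :
    ∑ i, ∑ k ∈ Icc 1 (c' i), f i k ≤ ∑ i, ∑ k ∈ Icc 1 (c i), f i k := by
  have hshift : ∀ i, ∑ k ∈ Icc 1 (c' i), (f i k - t) ≤ ∑ k ∈ Icc 1 (c i), (f i k - t) :=
    fun i ↦ sum_Icc_one_le_of_nonneg_of_nonpos (fun k hk ↦ sub_nonneg.2 (hsel i k hk))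
      (fun k hk ↦ sub_nonpos.2 (hunsel i k hk)) (c' i)
  have hcast : ∑ i, (c' i : ℝ) = ∑ i, (c i : ℝ) := by exact_mod_cast hsum
  simp only [sum_Icc_one_sub_const] at hshift
  have := sum_le_sum fun i (_ : i ∈ univ) ↦ hshift i
  simp only [sum_sub_distrib, ← sum_mul, hcast] at this
  linarith

theorem exists_threshold_of_greedy {ι : Type*} [Finite ι] (f : ι → ℕ → ℝ)
    (hanti : ∀ i, Antitone (f i)) (c : ι → ℕ)
    (hgreedy : ∀ i j, 1 ≤ c i → f j (c j + 1) ≤ f i (c i)) :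
    ∃ t, (∀ i, ∀ k ∈ Icc 1 (c i), t ≤ f i k) ∧ ∀ i k, c i < k → f i k ≤ t := by
  refine ⟨⨆ j, f j (c j + 1), fun i k hk ↦ ?_, fun i k hk ↦ ?_⟩
  · rw [mem_Icc] at hk
    have : Nonempty ι := ⟨i⟩
    exact (ciSup_le fun j ↦ hgreedy i j (hk.1.trans hk.2)).trans (hanti i hk.2)
  · exact (hanti i hk).trans <|
      le_ciSup (f := fun j ↦ f j (c j + 1)) (Set.finite_range _).bddAbove i

theorem stmt_13_general (N R : ℕ) (f : Fin N → ℕ → ℝ)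
    (hdec : ∀ i, StrictAnti (f i))
    (c : Fin N → ℕ) (hc : ∑ i, c i = R)
    (hgreedy : ∀ i j, 1 ≤ c i → f j (c j + 1) ≤ f i (c i))
    (c' : Fin N → ℕ) (hc' : ∑ i, c' i = R) :
    ∑ i, ∑ k ∈ Finset.Icc 1 (c' i), f i k ≤ ∑ i, ∑ k ∈ Finset.Icc 1 (c i), f i k := by
  obtain ⟨t, hsel, hunsel⟩ :=
    exists_threshold_of_greedy f (fun i ↦ (hdec i).antitone) c hgreedy
  exact sum_sum_Icc_le_of_threshold f c c' t hsel hunsel (hc'.trans hc.symm)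

/-- Selections are represented by counts `c : Fin N → ℕ`, where `c i` is the number of
items selected from chain `i` (items `(i,1),…,(i,c i)`), automatically satisfying the
precedence constraint. A greedy output is characterized by the property that every
selected item has value at least that of every still-available (next unselected) item. -/
theorem stmt_13 (N R : ℕ) (f : Fin N → ℕ → ℝ)
    (hpos : ∀ i k, 1 ≤ k → 0 < f i k)
    (hdec : ∀ i, StrictAnti (f i))
    (c : Fin N → ℕ) (hc : ∑ i, c i = R)
    (hgreedy : ∀ i j, 1 ≤ c i → f j (c j + 1) ≤ f i (c i))
    (c' : Fin N → ℕ) (hc' : ∑ i, c' i = R) :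
    ∑ i, ∑ k ∈ Finset.Icc 1 (c' i), f i k ≤ ∑ i, ∑ k ∈ Finset.Icc 1 (c i), f i k :=
  stmt_13_general N R f hdec c hc hgreedy c' hc'
end

section
/- Let D : ℕ → ℝ be convex in the discrete sense (D(k) − D(k+1) is nonincreasing in k, i.e., D is discretely convex) and let w i > 0. Then for the integer program minimizing ∑ᵢ w i D(b i) subject to ∑ b i = B, b i ≥ b_min, an allocation b is optimal if and only if max over i of w i (D(b i) − D(b i + 1)) ≤ min over j with b j > b_min of w j (D(b j − 1) − D(b j)). -/
private lemma sum_split' {M : Type*} [AddCommMonoid M] {N : ℕ} (i j : Fin N) (hij : i ≠ j)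
    (f : Fin N → M) :
    ∑ k, f k = f i + f j + ∑ k ∈ Finset.univ \ {i, j}, f k := by
  have hsub : ({i, j} : Finset (Fin N)) ⊆ Finset.univ := Finset.subset_univ _
  have h1 := Finset.sum_sdiff (f := f) hsub
  rw [Finset.sum_pair hij] at h1
  rw [← h1]
  abel

private lemma key_lemma (N : ℕ) (w : Fin N → ℝ) (hw : ∀ i, 0 < w i)
    (D : ℕ → ℝ) (hconv : ∀ k : ℕ, D (k + 1) - D (k + 2) ≤ D k - D (k + 1))
    (B bmin : ℕ) (b : Fin N → ℕ) (hfeas : ∀ i, bmin ≤ b i) (hsum : ∑ i, b i = B)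
    (hloc : ∀ i j, bmin < b j →
        w i * (D (b i) - D (b i + 1)) ≤ w j * (D (b j - 1) - D (b j))) :
    ∀ n : ℕ, ∀ b' : Fin N → ℕ, (∀ i, bmin ≤ b' i) → ∑ i, b' i = B →
      (∑ i, ((b i - b' i) + (b' i - b i))) ≤ n →
      ∑ i, w i * D (b i) ≤ ∑ i, w i * D (b' i) := by
  have hanti : Antitone (fun k => D k - D (k + 1)) :=
    antitone_nat_of_succ_le (fun n => hconv n)
  intro n
  induction n with
  | zero =>
    intro b' hfeas' hsum' hm
    have hz : ∀ i ∈ Finset.univ, ((b i - b' i) + (b' i - b i)) = 0 := by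
      rw [← Finset.sum_eq_zero_iff]
      omega
    have heq : ∀ i, b' i = b i := by
      intro i
      have := hz i (Finset.mem_univ i)
      omega
    apply le_of_eq
    exact Finset.sum_congr rfl (fun i _ => by rw [heq i])
  | succ n ih =>
    intro b' hfeas' hsum' hm
    by_cases hbb : ∀ i, b' i = b i
    · apply le_of_eq
      exact Finset.sum_congr rfl (fun i _ => by rw [hbb i])
    · push_neg at hbb
      obtain ⟨i0, hi0⟩ := hbb
      have hi : ∃ i, b i < b' i := by
        by_contra h
        push_neg at h
        have hlt : ∑ i, b' i < ∑ i, b i := by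
          apply Finset.sum_lt_sum (fun k _ => h k)
          exact ⟨i0, Finset.mem_univ i0, lt_of_le_of_ne (h i0) hi0⟩
        omega
      have hj : ∃ j, b' j < b j := by
        obtain ⟨i, hi⟩ := hi
        by_contra h
        push_neg at h
        have hlt : ∑ k, b k < ∑ k, b' k := by
          apply Finset.sum_lt_sum (fun k _ => h k)
          exact ⟨i, Finset.mem_univ i, hi⟩
        omega
      obtain ⟨i, hi⟩ := hi
      obtain ⟨j, hj⟩ := hj
      have hij : i ≠ j := by
        intro h; subst h; omega
      set b'' : Fin N → ℕ :=
        Function.update (Function.update b' i (b' i - 1)) j (b' j + 1) with hb''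
      have hb''i : b'' i = b' i - 1 := by
        rw [hb'', Function.update_of_ne hij, Function.update_self]
      have hb''j : b'' j = b' j + 1 := by
        rw [hb'', Function.update_self]
      have hb''k : ∀ k, k ≠ i → k ≠ j → b'' k = b' k := by
        intro k hki hkj
        rw [hb'', Function.update_of_ne hkj, Function.update_of_ne hki]
      have hfeas'' : ∀ k, bmin ≤ b'' k := by
        intro k
        by_cases hk1 : k = j
        · subst hk1; rw [hb''j]; have := hfeas' k; omega
        by_cases hk2 : k = i
        · subst hk2; rw [hb''i]; have := hfeas k; omega
        · rw [hb''k k hk2 hk1]; exact hfeas' k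
      have hsplit'' := sum_split' i j hij b''
      have hsplit' := sum_split' i j hij b'
      have hrest : ∑ k ∈ Finset.univ \ {i, j}, b'' k = ∑ k ∈ Finset.univ \ {i, j}, b' k := by
        apply Finset.sum_congr rfl
        intro k hk
        simp only [Finset.mem_sdiff, Finset.mem_insert, Finset.mem_singleton] at hk
        exact hb''k k (fun h => hk.2 (Or.inl h)) (fun h => hk.2 (Or.inr h))
      have hsum'' : ∑ k, b'' k = B := by
        rw [hsplit'', hb''i, hb''j, hrest]
        rw [hsplit'] at hsum'
        omega
      -- cost comparison
      have hbj : bmin < b j := lt_of_le_of_lt (hfeas' j) hj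
      have hchain : w i * (D (b' i - 1) - D (b' i)) ≤ w j * (D (b' j) - D (b' j + 1)) := by
        have h1 : (fun k => D k - D (k + 1)) (b' i - 1) ≤ (fun k => D k - D (k + 1)) (b i) :=
          hanti (by omega)
        have h2 : (fun k => D k - D (k + 1)) (b j - 1) ≤ (fun k => D k - D (k + 1)) (b' j) :=
          hanti (by omega)
        simp only at h1 h2
        have he1 : b' i - 1 + 1 = b' i := by omega
        have he2 : b j - 1 + 1 = b j := by omega
        rw [he1] at h1
        rw [he2] at h2
        have hl := hloc i j hbj
        nlinarith [(hw i).le, (hw j).le, mul_le_mul_of_nonneg_left h1 (hw i).le,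
          mul_le_mul_of_nonneg_left h2 (hw j).le]
      have hcost : ∑ k, w k * D (b'' k) ≤ ∑ k, w k * D (b' k) := by
        rw [sum_split' i j hij (fun k => w k * D (b'' k)),
            sum_split' i j hij (fun k => w k * D (b' k))]
        have hrestc : ∑ k ∈ Finset.univ \ {i, j}, w k * D (b'' k)
            = ∑ k ∈ Finset.univ \ {i, j}, w k * D (b' k) := by
          apply Finset.sum_congr rfl
          intro k hk
          simp only [Finset.mem_sdiff, Finset.mem_insert, Finset.mem_singleton] at hk
          rw [hb''k k (fun h => hk.2 (Or.inl h)) (fun h => hk.2 (Or.inr h))]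
        rw [hrestc, hb''i, hb''j]
        linarith [hchain]
      -- measure decreases
      have hmeas : (∑ k, ((b k - b'' k) + (b'' k - b k))) < ∑ k, ((b k - b' k) + (b' k - b k)) := by
        apply Finset.sum_lt_sum
        · intro k _
          by_cases hk1 : k = j
          · subst hk1; rw [hb''j]; omega
          by_cases hk2 : k = i
          · subst hk2; rw [hb''i]; omega
          · rw [hb''k k hk2 hk1]
        · refine ⟨i, Finset.mem_univ i, ?_⟩
          rw [hb''i]; omega
      have hle : (∑ k, ((b k - b'' k) + (b'' k - b k))) ≤ n := by omega
      exact le_trans (ih b'' hfeas'' hsum'' hle) hcost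

theorem stmt_14 (N : ℕ) (hN : 1 ≤ N) (w : Fin N → ℝ) (hw : ∀ i, 0 < w i)
    (D : ℕ → ℝ) (hconv : ∀ k : ℕ, D (k + 1) - D (k + 2) ≤ D k - D (k + 1))
    (B bmin : ℕ) (b : Fin N → ℕ) (hfeas : ∀ i, bmin ≤ b i) (hsum : ∑ i, b i = B) :
    (∀ b' : Fin N → ℕ, (∀ i, bmin ≤ b' i) → ∑ i, b' i = B →
        ∑ i, w i * D (b i) ≤ ∑ i, w i * D (b' i)) ↔
    (∀ i j, bmin < b j →
        w i * (D (b i) - D (b i + 1)) ≤ w j * (D (b j - 1) - D (b j))) := by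
  constructor
  · intro hopt i j hj
    by_cases hij : i = j
    · subst hij
      have h1 : b i - 1 + 1 = b i := by omega
      have h2 : b i - 1 + 2 = b i + 1 := by omega
      have := hconv (b i - 1)
      rw [h1, h2] at this
      exact mul_le_mul_of_nonneg_left this (hw i).le
    · set b' : Fin N → ℕ :=
        Function.update (Function.update b i (b i + 1)) j (b j - 1) with hb'
      have hb'i : b' i = b i + 1 := by
        rw [hb', Function.update_of_ne hij, Function.update_self]
      have hb'j : b' j = b j - 1 := by
        rw [hb', Function.update_self]
      have hb'k : ∀ k, k ≠ i → k ≠ j → b' k = b k := by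
        intro k hki hkj
        rw [hb', Function.update_of_ne hkj, Function.update_of_ne hki]
      have hfeas' : ∀ k, bmin ≤ b' k := by
        intro k
        by_cases hk1 : k = j
        · subst hk1; rw [hb'j]; omega
        by_cases hk2 : k = i
        · subst hk2; rw [hb'i]; have := hfeas k; omega
        · rw [hb'k k hk2 hk1]; exact hfeas k
      have hrest : ∑ k ∈ Finset.univ \ {i, j}, b' k = ∑ k ∈ Finset.univ \ {i, j}, b k := by
        apply Finset.sum_congr rfl
        intro k hk
        simp only [Finset.mem_sdiff, Finset.mem_insert, Finset.mem_singleton] at hk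
        exact hb'k k (fun h => hk.2 (Or.inl h)) (fun h => hk.2 (Or.inr h))
      have hsum' : ∑ k, b' k = B := by
        rw [sum_split' i j hij b', hb'i, hb'j, hrest]
        rw [sum_split' i j hij b] at hsum
        omega
      have hle := hopt b' hfeas' hsum'
      rw [sum_split' i j hij (fun k => w k * D (b k)),
          sum_split' i j hij (fun k => w k * D (b' k))] at hle
      have hrestc : ∑ k ∈ Finset.univ \ {i, j}, w k * D (b' k)
          = ∑ k ∈ Finset.univ \ {i, j}, w k * D (b k) := by
        apply Finset.sum_congr rfl
        intro k hk
        simp only [Finset.mem_sdiff, Finset.mem_insert, Finset.mem_singleton] at hk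
        rw [hb'k k (fun h => hk.2 (Or.inl h)) (fun h => hk.2 (Or.inr h))]
      rw [hrestc, hb'i, hb'j] at hle
      linarith [hle]
  · intro hloc b' hfeas' hsum'
    exact key_lemma N w hw D hconv B bmin b hfeas hsum hloc
      (∑ i, ((b i - b' i) + (b' i - b i))) b' hfeas' hsum' le_rfl
end

section
/- Let β_K = β_V = β > 1 and α_K > α_V > 0, w_K = w_V = w > 0, budget b_K + b_V = B. Then the optimal continuous allocation satisfies b_K − b_V = log(α_K/α_V)/log β > 0, i.e., the component with larger distortion coefficient receives strictly more bits, and the excess is exactly log(α_K/α_V)/log β. -/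
/-!
Moving `δ` bits from one component to the other multiplies the key term `a = αK β^(-bK)` by
`β^(-δ)` and the value term `c = αV β^(-bV)` by `β^δ`; as `δ` ranges over `ℝ`, `u = β^δ` ranges
over all positive reals. Minimality of `a / u + c * u` at `u = 1` forces `a = c`, i.e.
`β^(bK - bV) = αK / αV`, and `αK > αV` makes this logarithm positive.
-/

theorem eq_of_forall_add_le_div_add_mul {a c : ℝ} (ha : 0 ≤ a) (hc : 0 < c)
    (h : ∀ u, 0 < u → a + c ≤ a / u + c * u) : a = c := by
  -- `a / u + c * u - (a + c) = (u - 1) (c u - a) / u`, negative strictly between `1` and `a / c`.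
  have hu : 0 < (a + c) / (2 * c) := by positivity
  have hmid := h _ hu
  field_simp at hmid
  nlinarith [sq_nonneg (a - c)]

namespace Real

theorem mul_rpow_neg_eq_of_forall_le_shift {β p q x y : ℝ} (hβ0 : 0 < β) (hβ1 : β ≠ 1)
    (hp : 0 ≤ p) (hq : 0 < q)
    (h : ∀ δ, p * β ^ (-x) + q * β ^ (-y) ≤ p * β ^ (-(x + δ)) + q * β ^ (-(y - δ))) :
    p * β ^ (-x) = q * β ^ (-y) := by
  refine eq_of_forall_add_le_div_add_mul (by positivity) (by positivity) fun u hu => ?_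
  have hshift := h (logb β u)
  rwa [show -(x + logb β u) = -x - logb β u by ring, show -(y - logb β u) = -y + logb β u by ring,
    rpow_sub hβ0, rpow_add hβ0, rpow_logb hβ0 hβ1 hu, ← mul_div_assoc, ← mul_assoc] at hshift

theorem sub_eq_logb_of_mul_rpow_neg_eq {β p q x y : ℝ} (hβ0 : 0 < β) (hβ1 : β ≠ 1)
    (hq : 0 < q) (h : p * β ^ (-x) = q * β ^ (-y)) :
    x - y = logb β (p / q) := by
  have hratio : p / q = β ^ (x - y) := by
    rw [div_eq_iff hq.ne', rpow_sub hβ0, div_mul_eq_mul_div, eq_div_iff (rpow_pos_of_pos hβ0 y).ne']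
    have hx := rpow_pos_of_pos hβ0 x
    rw [rpow_neg hβ0.le, rpow_neg hβ0.le] at h
    field_simp at h
    linarith
  rw [hratio, logb_rpow hβ0 hβ1]

end Real

theorem stmt_17 (w αK αV β B : ℝ)
    (hw : 0 < w) (hαV : 0 < αV) (hα : αV < αK) (hβ : 1 < β)
    (bK bV : ℝ) (hsum : bK + bV = B)
    (hopt : ∀ bK' bV' : ℝ, bK' + bV' = B →
      w * αK * β ^ (-bK) + w * αV * β ^ (-bV) ≤
        w * αK * β ^ (-bK') + w * αV * β ^ (-bV')) :
    bK - bV = Real.log (αK / αV) / Real.log β ∧ 0 < bK - bV := by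
  have hβ0 : 0 < β := one_pos.trans hβ
  have hbalanced : αK * β ^ (-bK) = αV * β ^ (-bV) :=
    Real.mul_rpow_neg_eq_of_forall_le_shift hβ0 hβ.ne' (hαV.trans hα).le hαV fun δ => by
      have hδ := hopt (bK + δ) (bV - δ) (by linarith)
      simp only [mul_assoc, ← mul_add] at hδ
      exact le_of_mul_le_mul_left hδ hw
  have hdiff := Real.sub_eq_logb_of_mul_rpow_neg_eq hβ0 hβ.ne' hαV hbalanced
  exact ⟨hdiff, hdiff ▸ Real.logb_pos hβ ((one_lt_div hαV).2 hα)⟩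
end
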